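/- arXiv:2103.06468 — 5 statements merged into one kernel-verified Lean document; each statement's English description precedes it below -/
import Mathlib

section
/- Let H be a simple r-uniform r-partite hypergraph with r-partition (X_1,...,X_r), and let I = I(H) be its edge ideal in k[V(H)]. Then for every m ≥ 1, the minimal degree of a monomial in the m-th symbolic power I^(m) equals rm. -/
/-!
Every part `X_i` of the `r`-partition is a vertex cover, so `I` lies in the prime generated by
the variables of `X_i`, hence in a minimal prime `p` below it, and `p` is associated to `I`.
A monomial `X^a ∈ I^(m)` therefore satisfies `s * X^a ∈ I^m` for some `s ∉ p`. The variables of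
`X_i` lying in `p` generate an ideal `P ≤ p` that still contains `I`, and `s` has a term free of
these variables; comparing that term of `s * X^a` with `P^m` shows that `X^a` has degree at
least `m` in the variables of `X_i`. Summing over the `r` parts gives `deg X^a ≥ r * m`, and the
`m`-th power of an edge monomial attains this bound.
-/

open MvPolynomial

noncomputable def symbolicPower {R : Type*} [CommRing R] (I : Ideal R) (n : ℕ) : Ideal R :=
  sInf { J : Ideal R | ∃ (p : Ideal R) (hp : p.IsPrime),
    p ∈ associatedPrimes R (R ⧸ I) ∧
    J = Ideal.comap (algebraMap R (Localization (@Ideal.primeCompl R _ p hp)))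
        (Ideal.map (algebraMap R (Localization (@Ideal.primeCompl R _ p hp))) (I ^ n)) }

noncomputable def edgeIdeal (k : Type*) {V : Type*} [CommRing k] [DecidableEq V]
    (E : Finset (Finset V)) : Ideal (MvPolynomial V k) :=
  Ideal.span ((fun e : Finset V => ∏ x ∈ e, (X x : MvPolynomial V k)) '' ↑E)

section SymbolicPower

variable {R : Type*} [CommRing R]

theorem pow_le_symbolicPower (I : Ideal R) (n : ℕ) : I ^ n ≤ symbolicPower I n :=
  le_sInf fun _ ⟨_, _, _, hJ⟩ => hJ ▸ Ideal.le_comap_map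

theorem exists_notMem_mul_mem_pow_of_mem_symbolicPower [IsNoetherianRing R] {I p : Ideal R}
    (hp : p ∈ I.minimalPrimes) {n : ℕ} {x : R} (hx : x ∈ symbolicPower I n) :
    ∃ s ∉ p, s * x ∈ I ^ n := by
  have hass : p ∈ associatedPrimes R (R ⧸ I) := by
    apply Module.associatedPrimes.minimalPrimes_annihilator_subset_associatedPrimes R (R ⧸ I)
    rwa [Ideal.annihilator_quotient]
  have hp_prime : p.IsPrime := hp.1.1
  have hle : symbolicPower I n ≤ Ideal.comap (algebraMap R (Localization p.primeCompl))
      (Ideal.map (algebraMap R (Localization p.primeCompl)) (I ^ n)) :=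
    sInf_le ⟨p, hp_prime, hass, rfl⟩
  exact (IsLocalization.algebraMap_mem_map_algebraMap_iff p.primeCompl _ _ _).mp (hle hx)

end SymbolicPower

namespace MvPolynomial

variable {σ R : Type*}

theorem isPrime_span_X_image [CommRing R] [IsDomain R] (s : Set σ) :
    (Ideal.span (X '' s : Set (MvPolynomial σ R))).IsPrime := by
  classical
  set P := Ideal.span (X '' s : Set (MvPolynomial σ R))
  let φ : MvPolynomial σ R →ₐ[R] MvPolynomial σ R := aeval fun i => if i ∈ s then 0 else X i
  have hφ : (Ideal.Quotient.mkₐ R P).comp φ = Ideal.Quotient.mkₐ R P := by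
    refine algHom_ext fun i => ?_
    by_cases hi : i ∈ s
    · have hXi : X i ∈ P := Ideal.subset_span ⟨i, hi, rfl⟩
      simpa [φ, hi] using (Ideal.Quotient.eq_zero_iff_mem.mpr hXi).symm
    · simp [φ, hi]
  have hker : RingHom.ker φ = P := by
    refine le_antisymm (fun f hf => ?_) ?_
    · rw [← Ideal.Quotient.eq_zero_iff_mem, ← Ideal.Quotient.mkₐ_eq_mk R, ← hφ]
      simp [RingHom.mem_ker.mp hf]
    · rw [Ideal.span_le]
      rintro _ ⟨i, hi, rfl⟩
      simp [φ, hi]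
  exact hker ▸ RingHom.ker_isPrime φ

variable [CommSemiring R]

theorem X_mem_span_X_image_iff [Nontrivial R] {s : Set σ} {i : σ} :
    (X i : MvPolynomial σ R) ∈ Ideal.span (X '' s) ↔ i ∈ s := by
  simp [mem_ideal_span_X_image, support_X, Finsupp.single_apply_ne_zero]

theorem le_sum_of_mem_support_of_mem_span_X_image_pow {s : Finset σ} {m : ℕ}
    {f : MvPolynomial σ R} (hf : f ∈ Ideal.span (X '' ↑s) ^ m) {b : σ →₀ ℕ}
    (hb : b ∈ f.support) : m ≤ ∑ i ∈ s, b i := by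
  classical
  induction m generalizing f b with
  | zero => exact Nat.zero_le _
  | succ m ih =>
    rw [pow_succ] at hf
    induction hf using Submodule.mul_induction_on' generalizing b with
    | mem_mul_mem g hg h hh =>
      obtain ⟨c, hc, d, hd, rfl⟩ := Finset.mem_add.mp (support_mul g h hb)
      obtain ⟨i, hi, hdi⟩ := mem_ideal_span_X_image.mp hh d hd
      have := Finset.single_le_sum (fun j _ => Nat.zero_le (d j)) hi
      simp only [Finsupp.add_apply, Finset.sum_add_distrib]
      have := ih hg hc
      omega
    | add g _ h _ hg hh =>
      rcases Finset.mem_union.mp (support_add hb) with hb | hb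
      exacts [hg hb, hh hb]

theorem le_sum_of_mul_monomial_mem_span_X_image_pow {s : Finset σ} {m : ℕ}
    {g : MvPolynomial σ R} (hg : g ∉ Ideal.span (X '' ↑s)) {a : σ →₀ ℕ}
    (h : g * monomial a 1 ∈ Ideal.span (X '' ↑s) ^ m) : m ≤ ∑ i ∈ s, a i := by
  obtain ⟨b, hb, hbs⟩ : ∃ b ∈ g.support, ∀ i ∈ s, b i = 0 := by
    simpa [mem_ideal_span_X_image] using hg
  have hba : b + a ∈ (g * monomial a 1).support := by
    simpa [coeff_mul_monomial] using hb
  simpa [Finset.sum_add_distrib, Finset.sum_eq_zero hbs] using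
    le_sum_of_mem_support_of_mem_span_X_image_pow h hba

end MvPolynomial

section EdgeIdeal

variable {k V : Type*} [CommRing k] [DecidableEq V] {E : Finset (Finset V)}

theorem prod_X_mem_edgeIdeal {e : Finset V} (he : e ∈ E) : ∏ x ∈ e, X x ∈ edgeIdeal k E :=
  Ideal.subset_span ⟨e, he, rfl⟩

theorem edgeIdeal_le_span_X_image {C : Set V} (hC : ∀ e ∈ E, ∃ x ∈ e, x ∈ C) :
    edgeIdeal k E ≤ Ideal.span (X '' C) := by
  rw [edgeIdeal, Ideal.span_le]
  rintro _ ⟨e, he, rfl⟩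
  obtain ⟨x, hxe, hxC⟩ := hC e he
  exact Ideal.mem_of_dvd _ (Finset.dvd_prod_of_mem _ hxe) (Ideal.subset_span ⟨x, hxC, rfl⟩)

theorem exists_X_mem_of_edgeIdeal_le {p : Ideal (MvPolynomial V k)} [p.IsPrime]
    (hp : edgeIdeal k E ≤ p) {e : Finset V} (he : e ∈ E) : ∃ x ∈ e, X x ∈ p :=
  Ideal.IsPrime.prod_mem_iff.mp (hp (prod_X_mem_edgeIdeal he))

theorem le_sum_of_monomial_mem_symbolicPower_edgeIdeal [IsDomain k] [IsNoetherianRing k]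
    [Finite V] {C : Finset V} (hC : ∀ e ∈ E, ∃ x ∈ e, x ∈ C) {m : ℕ} {a : V →₀ ℕ}
    (ha : monomial a 1 ∈ symbolicPower (edgeIdeal k E) m) : m ≤ ∑ x ∈ C, a x := by
  classical
  have := isPrime_span_X_image (R := k) (C : Set V)
  obtain ⟨p, hp, hpC⟩ :=
    Ideal.exists_minimalPrimes_le (edgeIdeal_le_span_X_image (k := k) hC)
  have : p.IsPrime := hp.1.1
  set C' := C.filter fun x => X x ∈ p
  have hC'p : Ideal.span (X '' ↑C') ≤ p := by
    rw [Ideal.span_le]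
    rintro _ ⟨x, hx, rfl⟩
    exact (Finset.mem_filter.mp hx).2
  have hIC' : edgeIdeal k E ≤ Ideal.span (X '' ↑C') := by
    refine edgeIdeal_le_span_X_image fun e he => ?_
    obtain ⟨x, hxe, hxp⟩ := exists_X_mem_of_edgeIdeal_le hp.1.2 he
    exact ⟨x, hxe, Finset.mem_filter.mpr ⟨X_mem_span_X_image_iff.mp (hpC hxp), hxp⟩⟩
  obtain ⟨g, hgp, hg⟩ := exists_notMem_mul_mem_pow_of_mem_symbolicPower hp ha
  calc m ≤ ∑ x ∈ C', a x :=
        le_sum_of_mul_monomial_mem_span_X_image_pow (fun h => hgp (hC'p h))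
          (Ideal.pow_right_mono hIC' m hg)
    _ ≤ ∑ x ∈ C, a x := Finset.sum_le_sum_of_subset (Finset.filter_subset _ _)

end EdgeIdeal

theorem stmt0_general {k V : Type*} [Field k] [Fintype V] [DecidableEq V]
    (r : ℕ) (E : Finset (Finset V)) (hE : E.Nonempty)
    (huniform : ∀ e ∈ E, e.card = r)
    (Xp : Fin r → Finset V)
    (hdisj : Pairwise fun i j => Disjoint (Xp i) (Xp j))
    (hcover : ∀ v : V, ∃ i, v ∈ Xp i)
    (hpartite : ∀ e ∈ E, ∀ i, (e ∩ Xp i).card = 1)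
    (m : ℕ) :
    IsLeast { d : ℕ | ∃ a : V →₀ ℕ,
        (monomial a (1 : k)) ∈ symbolicPower (edgeIdeal k E) m ∧
        (a.sum fun _ e => e) = d } (r * m) := by
  obtain ⟨e, he⟩ := hE
  refine ⟨⟨∑ x ∈ e, Finsupp.single x m, ?_, ?_⟩, ?_⟩
  · have hpow : (∏ x ∈ e, X x) ^ m ∈ edgeIdeal k E ^ m :=
      Ideal.pow_mem_pow (prod_X_mem_edgeIdeal he) m
    simpa [monomial_sum_one, ← X_pow_eq_monomial, Finset.prod_pow] using
      pow_le_symbolicPower _ _ hpow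
  · change Finsupp.degree _ = _
    simp [huniform e he]
  · rintro d ⟨a, ha, rfl⟩
    have hXp_cover : ∀ i, ∀ e ∈ E, ∃ x ∈ e, x ∈ Xp i := fun i e he => by
      obtain ⟨x, hx⟩ := Finset.card_pos.mp (hpartite e he i).ge
      exact ⟨x, Finset.mem_inter.mp hx⟩
    have hunion : Finset.univ.biUnion Xp = Finset.univ :=
      Finset.eq_univ_of_forall fun v => by simpa using hcover v
    calc r * m = ∑ _i : Fin r, m := by simp
      _ ≤ ∑ i, ∑ x ∈ Xp i, a x := Finset.sum_le_sum fun i _ =>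
        le_sum_of_monomial_mem_symbolicPower_edgeIdeal (hXp_cover i) ha
      _ = ∑ x ∈ Finset.univ.biUnion Xp, a x :=
        (Finset.sum_biUnion fun i _ j _ hij => hdisj hij).symm
      _ = a.sum fun _ e => e := by rw [hunion, ← Finsupp.degree_eq_sum]; rfl

/-- For a simple r-uniform r-partite hypergraph H with edge ideal I,
the minimal degree of a monomial in I^(m) equals r*m, for every m ≥ 1. -/
theorem stmt0 {k V : Type*} [Field k] [Fintype V] [DecidableEq V]
    (r : ℕ) (hr : 1 ≤ r) (E : Finset (Finset V)) (hE : E.Nonempty)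
    (huniform : ∀ e ∈ E, e.card = r)
    (Xp : Fin r → Finset V)
    (hdisj : Pairwise fun i j => Disjoint (Xp i) (Xp j))
    (hcover : ∀ v : V, ∃ i, v ∈ Xp i)
    (hpartite : ∀ e ∈ E, ∀ i, (e ∩ Xp i).card = 1)
    (m : ℕ) (hm : 1 ≤ m) :
    IsLeast { d : ℕ | ∃ a : V →₀ ℕ,
        (monomial a (1 : k)) ∈ symbolicPower (edgeIdeal k E) m ∧
        (a.sum fun _ e => e) = d } (r * m) :=
  stmt0_general r E hE huniform Xp hdisj hcover hpartite m
end

section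
/- Let H be a simple r-uniform r-partite hypergraph with at least one hyperedge of size ≥ 2. Then the fractional chromatic number of H equals r/(r−1). -/
/-- fractional chromatic number of a hypergraph on a finite vertex set,
as the optimum of the LP relaxation via fractional covers by independent sets. -/
noncomputable def fracChromatic {V : Type*} [Fintype V] [DecidableEq V]
    (E : Finset (Finset V)) : ℝ :=
  sInf { s : ℝ | ∃ w : Finset V → ℝ,
    (∀ W, 0 ≤ w W) ∧
    (∀ W, w W ≠ 0 → ∀ e ∈ E, ¬ e ⊆ W) ∧
    (∀ v : V, 1 ≤ ∑ W ∈ Finset.univ.filter (fun W => v ∈ W), w W) ∧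
    s = ∑ W : Finset V, w W }

/-!
For the lower bound, take an edge `e` with `k = |e| ≥ 2` vertices: every vertex of `e` has
cover weight at least `1`, while an independent set contains at most `k - 1` vertices of `e`,
so double counting gives `k ≤ (k - 1) · (total weight)`. For the upper bound, the complements
of the `r` parts are independent (every edge meets every part), and giving each of them weight
`1 / (r - 1)` covers every vertex exactly once, as it lies outside exactly `r - 1` parts.
-/

open Finset

section FractionalCover

variable {V : Type*} [Fintype V] [DecidableEq V]

def IsFractionalCover (E : Finset (Finset V)) (w : Finset V → ℝ) : Prop :=
  (∀ W, 0 ≤ w W) ∧ (∀ W, w W ≠ 0 → ∀ e ∈ E, ¬ e ⊆ W) ∧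
    ∀ v : V, 1 ≤ ∑ W ∈ univ.filter (fun W => v ∈ W), w W

theorem fracChromatic_eq_sInf (E : Finset (Finset V)) :
    fracChromatic E = sInf ((fun w => ∑ W, w W) '' {w | IsFractionalCover E w}) := by
  unfold fracChromatic IsFractionalCover
  congr 1
  ext s
  simp only [Set.mem_ofPred_eq, Set.mem_image, and_assoc, eq_comm (a := s)]

theorem sum_sum_filter_mem_eq_sum_card_inter_mul (e : Finset V) (w : Finset V → ℝ) :
    ∑ v ∈ e, ∑ W ∈ univ.filter (fun W => v ∈ W), w W = ∑ W, (#(e ∩ W) : ℝ) * w W := by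
  simp_rw [sum_filter]
  rw [sum_comm]
  refine sum_congr rfl fun W _ => ?_
  rw [← sum_filter, filter_mem_eq_inter, sum_const, nsmul_eq_mul]

namespace IsFractionalCover

variable {E : Finset (Finset V)} {w : Finset V → ℝ}

theorem card_le_mul_sum (hw : IsFractionalCover E w) {e : Finset V} (he : e ∈ E) :
    (#e : ℝ) ≤ (#e - 1) * ∑ W, w W := by
  obtain ⟨hnonneg, hindep, hcover⟩ := hw
  have hterm : ∀ W, (#(e ∩ W) : ℝ) * w W ≤ (#e - 1) * w W := by
    intro W
    rcases eq_or_ne (w W) 0 with h | h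
    · simp [h]
    have hlt : #(e ∩ W) < #e :=
      card_lt_card ⟨inter_subset_left, fun hsub => hindep W h e he (inter_eq_left.mp
        (subset_antisymm inter_subset_left hsub))⟩
    have hle : (#(e ∩ W) : ℝ) + 1 ≤ #e := by exact_mod_cast hlt
    exact mul_le_mul_of_nonneg_right (by linarith) (hnonneg W)
  calc (#e : ℝ) = ∑ _v ∈ e, (1 : ℝ) := by simp
    _ ≤ ∑ v ∈ e, ∑ W ∈ univ.filter (fun W => v ∈ W), w W := sum_le_sum fun v _ => hcover v
    _ = ∑ W, (#(e ∩ W) : ℝ) * w W := sum_sum_filter_mem_eq_sum_card_inter_mul e w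
    _ ≤ ∑ W, (#e - 1) * w W := sum_le_sum fun W _ => hterm W
    _ = (#e - 1) * ∑ W, w W := (mul_sum _ _ _).symm

theorem div_le_sum (hw : IsFractionalCover E w) {e : Finset V} (he : e ∈ E) (h2 : 2 ≤ #e) :
    (#e : ℝ) / (#e - 1) ≤ ∑ W, w W := by
  have : (1 : ℝ) < #e := by exact_mod_cast h2
  rw [div_le_iff₀ (by linarith), mul_comm]
  exact hw.card_le_mul_sum he

end IsFractionalCover

section ComplementCover

variable {ι : Type*} [Fintype ι]

noncomputable def complementCover (X : ι → Finset V) : Finset V → ℝ :=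
  ∑ i, Pi.single (X i)ᶜ (1 / (Fintype.card ι - 1 : ℝ))

theorem sum_complementCover (X : ι → Finset V) :
    ∑ W, complementCover X W = Fintype.card ι / (Fintype.card ι - 1 : ℝ) := by
  simp only [complementCover, Finset.sum_apply]
  rw [sum_comm]
  simp only [sum_pi_single', mem_univ, if_true, sum_const, card_univ, nsmul_eq_mul]
  ring

theorem complementCover_nonneg (hcard : 1 < Fintype.card ι) (X : ι → Finset V) (W : Finset V) :
    0 ≤ complementCover X W := by
  have : (1 : ℝ) < Fintype.card ι := by exact_mod_cast hcard
  simp only [complementCover, Finset.sum_apply]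
  refine sum_nonneg fun i _ => ?_
  rw [Pi.single_apply]
  split_ifs
  · exact div_nonneg zero_le_one (by linarith)
  · exact le_rfl

theorem exists_eq_compl_of_complementCover_ne_zero {X : ι → Finset V} {W : Finset V}
    (hW : complementCover X W ≠ 0) : ∃ i, W = (X i)ᶜ := by
  simp only [complementCover, Finset.sum_apply] at hW
  obtain ⟨i, -, hi⟩ := exists_ne_zero_of_sum_ne_zero hW
  by_contra! h
  exact hi (Pi.single_eq_of_ne (h i) _)

theorem sum_filter_mem_complementCover [DecidableEq ι] {X : ι → Finset V}
    (hcard : 1 < Fintype.card ι) (hdisj : Pairwise fun i j => Disjoint (X i) (X j))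
    {v : V} {i₀ : ι} (hi₀ : v ∈ X i₀) :
    ∑ W ∈ univ.filter (fun W => v ∈ W), complementCover X W = 1 := by
  have houtside : univ.filter (fun i => v ∉ X i) = univ.erase i₀ := by
    ext i
    simp only [mem_filter, mem_univ, true_and, mem_erase, and_true]
    exact ⟨fun hi h => hi (h ▸ hi₀), fun hi hv => disjoint_left.mp (hdisj hi) hv hi₀⟩
  have : (1 : ℝ) < Fintype.card ι := by exact_mod_cast hcard
  calc ∑ W ∈ univ.filter (fun W => v ∈ W), complementCover X W
      = ∑ i ∈ univ.filter (fun i => v ∉ X i), 1 / (Fintype.card ι - 1 : ℝ) := by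
        simp only [complementCover, Finset.sum_apply]
        rw [sum_comm]
        simp only [sum_pi_single', mem_filter, mem_univ, true_and, mem_compl]
        rw [← sum_filter]
    _ = (Fintype.card ι - 1 : ℝ) * (1 / (Fintype.card ι - 1 : ℝ)) := by
        rw [houtside, sum_const, card_erase_of_mem (mem_univ _), card_univ, nsmul_eq_mul,
          Nat.cast_sub hcard.le, Nat.cast_one]
    _ = 1 := mul_one_div_cancel (by linarith)

theorem isFractionalCover_complementCover [DecidableEq ι] {E : Finset (Finset V)}
    {X : ι → Finset V} (hcard : 1 < Fintype.card ι)
    (hdisj : Pairwise fun i j => Disjoint (X i) (X j)) (hcover : ∀ v, ∃ i, v ∈ X i)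
    (hmeet : ∀ e ∈ E, ∀ i, (e ∩ X i).Nonempty) :
    IsFractionalCover E (complementCover X) := by
  refine ⟨complementCover_nonneg hcard X, fun W hW e he hsub => ?_, fun v => ?_⟩
  · obtain ⟨i, rfl⟩ := exists_eq_compl_of_complementCover_ne_zero hW
    obtain ⟨x, hx⟩ := hmeet e he i
    exact mem_compl.mp (hsub (mem_inter.mp hx).1) (mem_inter.mp hx).2
  · obtain ⟨i₀, hi₀⟩ := hcover v
    exact (sum_filter_mem_complementCover hcard hdisj hi₀).ge

end ComplementCover

end FractionalCover

theorem stmt2_general {V : Type*} [Fintype V] [DecidableEq V]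
    (r : ℕ) (E : Finset (Finset V))
    (huniform : ∀ e ∈ E, e.card = r)
    (Xp : Fin r → Finset V)
    (hdisj : Pairwise fun i j => Disjoint (Xp i) (Xp j))
    (hcover : ∀ v : V, ∃ i, v ∈ Xp i)
    (hpartite : ∀ e ∈ E, ∀ i, (e ∩ Xp i).card = 1)
    (hbig : ∃ e ∈ E, 2 ≤ e.card) :
    fracChromatic E = (r : ℝ) / ((r : ℝ) - 1) := by
  obtain ⟨e₀, he₀, h2⟩ := hbig
  have hmeet : ∀ e ∈ E, ∀ i, (e ∩ Xp i).Nonempty := fun e he i =>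
    card_pos.mp (by rw [hpartite e he i]; exact one_pos)
  have hfeas : IsFractionalCover E (complementCover Xp) :=
    isFractionalCover_complementCover (by rw [Fintype.card_fin, ← huniform e₀ he₀]; omega)
      hdisj hcover hmeet
  have hlower : (r : ℝ) / (r - 1) ∈
      lowerBounds ((fun w => ∑ W, w W) '' {w | IsFractionalCover E w}) := by
    rintro _ ⟨w, hw, rfl⟩
    simpa only [huniform e₀ he₀] using hw.div_le_sum he₀ h2
  have hattained : (r : ℝ) / (r - 1) ∈ (fun w => ∑ W, w W) '' {w | IsFractionalCover E w} :=
    ⟨_, hfeas, by simp [sum_complementCover]⟩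
  rw [fracChromatic_eq_sInf]
  exact le_antisymm (csInf_le ⟨_, hlower⟩ hattained) (le_csInf ⟨_, hattained⟩ hlower)

/-- the fractional chromatic number of a simple r-uniform r-partite
hypergraph with a hyperedge of size ≥ 2 equals r/(r-1). -/
theorem stmt2 {V : Type*} [Fintype V] [DecidableEq V]
    (r : ℕ) (hr : 1 ≤ r) (E : Finset (Finset V))
    (huniform : ∀ e ∈ E, e.card = r)
    (Xp : Fin r → Finset V)
    (hdisj : Pairwise fun i j => Disjoint (Xp i) (Xp j))
    (hcover : ∀ v : V, ∃ i, v ∈ Xp i)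
    (hpartite : ∀ e ∈ E, ∀ i, (e ∩ Xp i).card = 1)
    (hbig : ∃ e ∈ E, 2 ≤ e.card) :
    fracChromatic E = (r : ℝ) / ((r : ℝ) - 1) :=
  stmt2_general r E huniform Xp hdisj hcover hpartite hbig
end

section
/- Let C_n be the cycle on vertices x_1,...,x_n (n ≥ 2) and let 2 ≤ t ≤ n. The t-path hypergraph H_t(C_n), whose hyperedges are the vertex sets of paths with t vertices in C_n, is t-partite if and only if n ≡ 0 (mod t). -/
/-- the hyperedges of the t-path hypergraph of the cycle Cₙ: all sets of t
cyclically consecutive vertices. -/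
def pathHyperedges (n t : ℕ) [NeZero n] : Finset (Finset (ZMod n)) :=
  Finset.image
    (fun i : ZMod n => Finset.image (fun j : Fin t => i + ((j : ℕ) : ZMod n)) Finset.univ)
    Finset.univ

/-!
The hyperedges are the translates `c + W` of the window `W = {0, …, t - 1}` in `ZMod n`.
If the `t` parts exist, fix one part `X`: every translate of `W` meets `X` exactly once, and
summing over all `n` translates counts each point of `X` once for each of the `t` points of `W`,
so `n = t * #X`. Conversely, if `t ∣ n`, the residue classes modulo `t` form the parts, since
the `t` consecutive vertices of a window have pairwise distinct residues.
-/

open Finset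
open scoped Pointwise

namespace Finset

variable {G K : Type*} [AddCommGroup G] [DecidableEq G]

theorem sum_addConvolution [Fintype G] (A B : Finset G) :
    ∑ x, A.addConvolution B x = #A * #B := by
  rw [← card_product,
    card_eq_sum_card_fiberwise (f := fun ab ↦ ab.1 + ab.2) (t := univ) (by simp)]
  rfl

theorem sum_card_vadd_inter [Fintype G] (S X : Finset G) :
    ∑ c : G, #((c +ᵥ S) ∩ X) = #S * #X := by
  simp_rw [card_vadd_inter]
  rw [← card_neg X, ← sum_addConvolution]
  exact Equiv.sum_comp (Equiv.neg G) (S.addConvolution (-X))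

theorem card_dvd_card_of_forall_card_vadd_inter_eq_one [Fintype G] {S X : Finset G}
    (h : ∀ c : G, #((c +ᵥ S) ∩ X) = 1) : #S ∣ Fintype.card G :=
  ⟨#X, by simpa [h] using sum_card_vadd_inter S X⟩

theorem card_vadd_inter_fiber [Fintype G] [AddCommGroup K] [DecidableEq K] (φ : G →+ K)
    (S : Finset G) (c : G) (k : K) :
    #((c +ᵥ S) ∩ ({v | φ v = k} : Finset G)) = #{s ∈ S | φ s = k - φ c} := by
  rw [← card_vadd_finset c {s ∈ S | φ s = k - φ c}]
  congr 1
  ext v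
  simp only [mem_inter, mem_filter, mem_univ, true_and, mem_vadd_finset, vadd_eq_add]
  constructor
  · rintro ⟨⟨s, hs, rfl⟩, hk⟩
    exact ⟨s, ⟨hs, by rw [← hk, map_add, add_sub_cancel_left]⟩, rfl⟩
  · rintro ⟨s, ⟨hs, hk⟩, rfl⟩
    exact ⟨⟨s, hs, rfl⟩, by rw [map_add, hk, add_sub_cancel]⟩

end Finset

section PathHypergraph

variable {n t : ℕ}

theorem ZMod.natCast_fin_injective (htn : t ≤ n) :
    Function.Injective fun j : Fin t ↦ ((j : ℕ) : ZMod n) :=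
  fun i j hij ↦ Fin.ext <| by
    simpa [ZMod.val_cast_of_lt (i.2.trans_le htn), ZMod.val_cast_of_lt (j.2.trans_le htn)]
      using congrArg ZMod.val hij

def pathWindow (n t : ℕ) : Finset (ZMod n) := univ.image fun j : Fin t ↦ ((j : ℕ) : ZMod n)

theorem mem_pathHyperedges [NeZero n] {e : Finset (ZMod n)} :
    e ∈ pathHyperedges n t ↔ ∃ c : ZMod n, c +ᵥ pathWindow n t = e := by
  simp [pathHyperedges, pathWindow, vadd_finset_def, image_image, Function.comp_def]

theorem card_pathWindow (htn : t ≤ n) : #(pathWindow n t) = t :=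
  (card_image_of_injective _ (ZMod.natCast_fin_injective htn)).trans (card_fin t)

theorem card_filter_pathWindow_castHom [NeZero t] (h : t ∣ n) (k : ZMod t) :
    #{v ∈ pathWindow n t | ZMod.castHom h (ZMod t) v = k} = 1 := by
  have hfiber : ({j | ZMod.castHom h (ZMod t) ((j : ℕ) : ZMod n) = k} : Finset (Fin t)) =
      {⟨k.val, k.val_lt⟩} := by
    ext j
    simp only [mem_filter, mem_univ, true_and, mem_singleton, map_natCast]
    constructor
    · rintro rfl
      exact Fin.ext (ZMod.val_cast_of_lt j.2).symm
    · rintro rfl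
      exact ZMod.natCast_zmod_val k
  rw [pathWindow, filter_image, hfiber, image_singleton, card_singleton]

end PathHypergraph

theorem stmt10_general (n t : ℕ) [NeZero n] (htn : t ≤ n) :
    (∃ Xp : Fin t → Finset (ZMod n),
        (Pairwise fun i j => Disjoint (Xp i) (Xp j)) ∧
        (∀ v : ZMod n, ∃ i, v ∈ Xp i) ∧
        (∀ e ∈ pathHyperedges n t, ∀ i, (e ∩ Xp i).card = 1)) ↔
      n % t = 0 := by
  constructor
  · rintro ⟨Xp, -, hcover, hedge⟩
    obtain ⟨i, -⟩ := hcover 0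
    have hdvd := card_dvd_card_of_forall_card_vadd_inter_eq_one fun c ↦
      hedge _ (mem_pathHyperedges.2 ⟨c, rfl⟩) i
    rw [card_pathWindow htn, ZMod.card] at hdvd
    exact Nat.mod_eq_zero_of_dvd hdvd
  · intro hmod
    have hdvd := Nat.dvd_of_mod_eq_zero hmod
    have : NeZero t := .of_pos (Nat.pos_of_dvd_of_pos hdvd (NeZero.pos n))
    let φ : ZMod n →+ ZMod t := ZMod.castHom hdvd (ZMod t)
    refine ⟨fun i ↦ {v | φ v = ((i : ℕ) : ZMod t)}, fun i j hij ↦ ?_,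
      fun v ↦ ⟨⟨(φ v).val, ZMod.val_lt _⟩, by simp⟩, fun e he i ↦ ?_⟩
    · exact disjoint_filter.2 fun v _ hi hj ↦
        hij (ZMod.natCast_fin_injective le_rfl (hi.symm.trans hj))
    · obtain ⟨c, rfl⟩ := mem_pathHyperedges.1 he
      rw [card_vadd_inter_fiber]
      exact card_filter_pathWindow_castHom hdvd _

/-- the t-path hypergraph of the cycle Cₙ (2 ≤ t ≤ n) is t-partite
iff t divides n. -/
theorem stmt10 (n t : ℕ) [NeZero n] (hn : 2 ≤ n) (ht : 2 ≤ t) (htn : t ≤ n) :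
    (∃ Xp : Fin t → Finset (ZMod n),
        (Pairwise fun i j => Disjoint (Xp i) (Xp j)) ∧
        (∀ v : ZMod n, ∃ i, v ∈ Xp i) ∧
        (∀ e ∈ pathHyperedges n t, ∀ i, (e ∩ Xp i).card = 1)) ↔
      n % t = 0 :=
  stmt10_general n t htn
end

section
/- Let C_n be the cycle on x_1,...,x_n, 2 ≤ t ≤ n, and I = I_t(C_n) the t-path ideal. If I^(r) = I^r for all r ≥ 1, then t divides n. -/
/-! If `t ∤ n`, put `r = ⌊n/t⌋ + 1`. A vertex of `Cₙ` lies in at most `t` of the `n` paths, so every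
vertex cover of the path hypergraph has at least `r` vertices. For an associated prime
`p = √(I : g)` of `I`, the vertices `W = {v | xᵥ ∈ p}` form a cover, and a monomial of `g` outside
`I` shows that each `w ∈ W` lies on a path meeting `W` only in `w`. The product of `r` such
paths divides `x₁ ⋯ xₙ · (∏_{v ∉ W} xᵥ)ʳ`, whose second factor is a unit at `p`; hence
`x₁ ⋯ xₙ ∈ I^(r)`. But every element of `Iʳ` has all its monomials of degree `≥ t r > n`. -/

open MvPolynomial

open scoped Finset

namespace MvPolynomial

variable {σ R : Type*} [CommRing R]

theorem prod_X_eq_monomial [DecidableEq σ] (s : Finset σ) :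
    ∏ x ∈ s, (X x : MvPolynomial σ R) = monomial (∑ x ∈ s, Finsupp.single x 1) 1 :=
  (monomial_sum_one s _).symm

theorem prod_X_mem_pow_idealOfVars_iff [Nontrivial R] [DecidableEq σ] (s : Finset σ) (d : ℕ) :
    ∏ x ∈ s, (X x : MvPolynomial σ R) ∈ idealOfVars σ R ^ d ↔ d ≤ #s := by
  rw [prod_X_eq_monomial, monomial_mem_pow_idealOfVars_iff _ _ one_ne_zero, map_sum]
  simp [Finsupp.degree_single]

end MvPolynomial

theorem Finsupp.sum_single_one_le_iff {σ : Type*} [DecidableEq σ] {s : Finset σ} {m : σ →₀ ℕ} :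
    ∑ x ∈ s, single x 1 ≤ m ↔ s ⊆ m.support := by
  have hs : ∀ x, (∑ y ∈ s, single y 1) x = if x ∈ s then 1 else 0 := fun x => by
    simp [Finsupp.finsetSum_apply, Finsupp.single_apply]
  simp only [Finsupp.le_def, hs, Finset.subset_iff, Finsupp.mem_support_iff]
  refine ⟨fun h x hx => by simpa [hx, Nat.one_le_iff_ne_zero] using h x, fun h x => ?_⟩
  split_ifs with hx
  exacts [Nat.one_le_iff_ne_zero.mpr (h hx), Nat.zero_le _]

theorem mem_symbolicPower_of_forall_exists_mul_mem {R : Type*} [CommRing R] {I : Ideal R}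
    {r : ℕ} {f : R} (h : ∀ p ∈ associatedPrimes R (R ⧸ I), ∃ u ∉ p, u * f ∈ I ^ r) :
    f ∈ symbolicPower I r := by
  refine Submodule.mem_sInf.mpr ?_
  rintro J ⟨p, hp, hass, rfl⟩
  obtain ⟨u, hu, huf⟩ := h p hass
  have hunit : IsUnit (algebraMap R (Localization p.primeCompl) u) :=
    IsLocalization.map_units _ (⟨u, hu⟩ : p.primeCompl)
  rw [Ideal.mem_comap, ← Ideal.unit_mul_mem_iff_mem _ hunit, ← map_mul]
  exact Ideal.mem_map_of_mem _ huf

theorem Ideal.exists_eq_radical_colon_of_mem_associatedPrimes {R : Type*} [CommRing R]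
    {I p : Ideal R} (hp : p ∈ associatedPrimes R (R ⧸ I)) :
    ∃ g ∉ I, p = (I.colon (Ideal.span {g})).radical := by
  obtain ⟨hprime, x, hx⟩ := hp
  obtain ⟨g, rfl⟩ := Ideal.Quotient.mk_surjective x
  have hcolon : (⊥ : Submodule R (R ⧸ I)).colon {Ideal.Quotient.mk I g} =
      I.colon (Ideal.span {g}) := by
    ext a
    rw [Submodule.mem_colon_singleton, Ideal.mem_colon_span_singleton, Submodule.mem_bot,
      Algebra.smul_def, Ideal.Quotient.algebraMap_eq, ← map_mul, Ideal.Quotient.eq_zero_iff_mem]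
  refine ⟨g, fun hg => hprime.ne_top ?_, hcolon ▸ hx⟩
  rw [hx, hcolon, Ideal.radical_eq_top, Ideal.eq_top_iff_one, Ideal.mem_colon_span_singleton,
    one_mul]
  exact hg

section Hypergraph

variable {V : Type*} [DecidableEq V] {k : Type*} [CommRing k] {E : Finset (Finset V)}

def IsVertexCover (E : Finset (Finset V)) (W : Finset V) : Prop :=
  ∀ e ∈ E, ∃ v ∈ e, v ∈ W

theorem edgeIdeal_eq_span_monomial :
    edgeIdeal k E = Ideal.span ((fun s => monomial s (1 : k)) ''
      ((fun e : Finset V => ∑ x ∈ e, Finsupp.single x 1) '' ↑E)) := by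
  rw [edgeIdeal, Set.image_image]
  simp_rw [prod_X_eq_monomial]

theorem mem_edgeIdeal_iff {f : MvPolynomial V k} :
    f ∈ edgeIdeal k E ↔ ∀ m ∈ f.support, ∃ e ∈ E, e ⊆ m.support := by
  simp [edgeIdeal_eq_span_monomial, mem_ideal_span_monomial_image, Finsupp.sum_single_one_le_iff]

theorem edgeIdeal_le_pow_idealOfVars {t : ℕ} (hE : ∀ e ∈ E, t ≤ #e) :
    edgeIdeal k E ≤ idealOfVars V k ^ t := by
  refine Ideal.span_le.mpr ?_
  rintro _ ⟨e, he, rfl⟩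
  refine Ideal.pow_le_pow_right (hE e he) ?_
  rw [← Finset.prod_const]
  exact Ideal.prod_mem_prod fun x _ => Ideal.subset_span ⟨x, rfl⟩

open Classical in
theorem isVertexCover_of_edgeIdeal_le [Fintype V] {p : Ideal (MvPolynomial V k)} [p.IsPrime]
    (hp : edgeIdeal k E ≤ p) : IsVertexCover E {v | X v ∈ p} := by
  intro e he
  have : ∏ x ∈ e, X x ∈ p := hp (Ideal.subset_span ⟨e, he, rfl⟩)
  simpa using Ideal.IsPrime.prod_mem_iff.mp this

theorem exists_private_edge_of_mem_associatedPrimes {p : Ideal (MvPolynomial V k)}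
    (hp : p ∈ associatedPrimes _ (MvPolynomial V k ⧸ edgeIdeal k E)) {w : V} (hw : X w ∈ p) :
    ∃ e ∈ E, w ∈ e ∧ ∀ v ∈ e, X v ∈ p → v = w := by
  obtain ⟨g, hg, rfl⟩ := Ideal.exists_eq_radical_colon_of_mem_associatedPrimes hp
  obtain ⟨μ, hμ, hμE⟩ : ∃ μ ∈ g.support, ∀ e ∈ E, ¬ e ⊆ μ.support := by
    simpa [mem_edgeIdeal_iff] using hg
  have hvar : ∀ v, X v ∈ ((edgeIdeal k E).colon (Ideal.span {g})).radical →
      v ∉ μ.support ∧ ∃ e ∈ E, e ⊆ insert v μ.support := by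
    intro v ⟨m, hm⟩
    rw [Ideal.mem_colon_span_singleton, X_pow_eq_monomial, mem_edgeIdeal_iff] at hm
    obtain ⟨e, he, hsub⟩ := hm (Finsupp.single v m + μ) (by simpa using hμ)
    have hsub' : e ⊆ insert v μ.support := by
      refine hsub.trans (Finsupp.support_add.trans ?_)
      rw [Finset.insert_eq]
      exact Finset.union_subset_union Finsupp.support_single_subset le_rfl
    refine ⟨fun hvμ => hμE e he ?_, e, he, hsub'⟩
    rwa [Finset.insert_eq_of_mem hvμ] at hsub'
  obtain ⟨-, e, he, hsub⟩ := hvar w hw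
  refine ⟨e, he, ?_, fun v hv hvp => ?_⟩
  · by_contra hwe
    exact hμE e he fun x hx =>
      (Finset.mem_insert.mp (hsub hx)).resolve_left (by rintro rfl; exact hwe hx)
  · exact (Finset.mem_insert.mp (hsub hv)).resolve_right (hvar v hvp).1

theorem prod_X_mem_symbolicPower_edgeIdeal [Fintype V] {r : ℕ}
    (hcover : ∀ W, IsVertexCover E W → r ≤ #W) :
    ∏ v, (X v : MvPolynomial V k) ∈ symbolicPower (edgeIdeal k E) r := by
  classical
  refine mem_symbolicPower_of_forall_exists_mul_mem fun p hp => ?_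
  have : p.IsPrime := hp.isPrime
  set W : Finset V := {v | X v ∈ p}
  have hW : IsVertexCover E W :=
    isVertexCover_of_edgeIdeal_le <| by
      simpa only [Submodule.annihilator_top, Ideal.annihilator_quotient] using hp.annihilator_le
  have hprivate : ∀ w ∈ W, ∃ e ∈ E, w ∈ e ∧ ∀ v ∈ e, v ∈ W → v = w := fun w hw => by
    simpa [W] using exists_private_edge_of_mem_associatedPrimes hp (by simpa [W] using hw)
  choose! edge hedgeE hwedge hedgeW using hprivate
  obtain ⟨W', hW'W, hW'r⟩ := Finset.exists_subset_card_eq (hcover W hW)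
  refine ⟨(∏ v ∈ Wᶜ, X v) ^ r, fun hu => ?_, ?_⟩
  · obtain ⟨v, hv, hvp⟩ := Ideal.IsPrime.prod_mem_iff.mp (Ideal.IsPrime.mem_of_pow_mem ‹_› r hu)
    exact Finset.mem_compl.mp hv (by simpa [W] using hvp)
  · have hprod : ∏ w ∈ W', ∏ x ∈ edge w, X x ∈ edgeIdeal k E ^ r := by
      rw [← hW'r, ← Finset.prod_const]
      exact Ideal.prod_mem_prod fun w hw => Ideal.subset_span ⟨edge w, hedgeE w (hW'W hw), rfl⟩
    refine Ideal.mem_of_dvd _ ?_ hprod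
    have herase : ∀ w ∈ W', ∏ x ∈ (edge w).erase w, X x ∣ ∏ v ∈ Wᶜ, (X v : MvPolynomial V k) :=
      fun w hw => Finset.prod_dvd_prod_of_subset _ _ _ fun x hx => Finset.mem_compl.mpr fun hxW =>
        (Finset.mem_erase.mp hx).1 (hedgeW w (hW'W hw) x (Finset.mem_of_mem_erase hx) hxW)
    calc ∏ w ∈ W', ∏ x ∈ edge w, X x
        = (∏ w ∈ W', X w) * ∏ w ∈ W', ∏ x ∈ (edge w).erase w, X x := by
          rw [← Finset.prod_mul_distrib]
          exact Finset.prod_congr rfl fun w hw =>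
            (Finset.mul_prod_erase _ _ (hwedge w (hW'W hw))).symm
      _ ∣ (∏ v, X v) * ∏ _w ∈ W', ∏ v ∈ Wᶜ, X v :=
          mul_dvd_mul (Finset.prod_dvd_prod_of_subset _ _ _ (Finset.subset_univ _))
            (Finset.prod_dvd_prod_of_dvd _ _ herase)
      _ = (∏ v ∈ Wᶜ, X v) ^ r * ∏ v, X v := by rw [Finset.prod_const, hW'r, mul_comm]

end Hypergraph

section PathHypergraph

variable {n t : ℕ} [NeZero n]

theorem card_of_mem_pathHyperedges (htn : t ≤ n) {e : Finset (ZMod n)}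
    (he : e ∈ pathHyperedges n t) : #e = t := by
  obtain ⟨i, -, rfl⟩ := Finset.mem_image.mp he
  rw [Finset.card_image_of_injective _ fun j₁ j₂ hj => ?_, Finset.card_univ, Fintype.card_fin]
  have h := congrArg ZMod.val (add_left_cancel hj)
  rwa [ZMod.val_natCast_of_lt (j₁.2.trans_le htn), ZMod.val_natCast_of_lt (j₂.2.trans_le htn),
    Fin.val_inj] at h

theorem le_mul_card_of_isVertexCover_pathHyperedges {W : Finset (ZMod n)}
    (hW : IsVertexCover (pathHyperedges n t) W) : n ≤ #W * t := by
  set window : ZMod n → Finset (ZMod n) :=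
    fun i => Finset.image (fun j : Fin t => i + ((j : ℕ) : ZMod n)) Finset.univ
  have hfiber : ∀ v, #{i | v ∈ window i} ≤ t := fun v => by
    calc #{i | v ∈ window i}
        ≤ #(Finset.image (fun j : Fin t => v - ((j : ℕ) : ZMod n)) Finset.univ) := by
          refine Finset.card_le_card fun i hi => ?_
          obtain ⟨j, -, hj⟩ := Finset.mem_image.mp (Finset.mem_filter.mp hi).2
          exact Finset.mem_image.mpr ⟨j, Finset.mem_univ _, by rw [← hj]; ring⟩
      _ ≤ t := Finset.card_image_le.trans (by simp)
  have hcover : Finset.univ ⊆ W.biUnion fun v => {i | v ∈ window i} := fun i _ => by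
    obtain ⟨v, hvi, hvW⟩ := hW (window i) (Finset.mem_image_of_mem _ (Finset.mem_univ i))
    exact Finset.mem_biUnion.mpr ⟨v, hvW, Finset.mem_filter.mpr ⟨Finset.mem_univ _, hvi⟩⟩
  calc n = #(Finset.univ : Finset (ZMod n)) := by simp
    _ ≤ #W * t := (Finset.card_le_card hcover).trans
        (Finset.card_biUnion_le_card_mul _ _ _ fun v _ => hfiber v)

end PathHypergraph

theorem stmt11_general {k : Type*} [Field k] (n t : ℕ) [NeZero n] (ht : 2 ≤ t)
    (htn : t ≤ n)
    (h : ∀ r : ℕ, 1 ≤ r →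
      symbolicPower (edgeIdeal k (pathHyperedges n t)) r =
        (edgeIdeal k (pathHyperedges n t)) ^ r) :
    t ∣ n := by
  by_contra hdvd
  set r := n / t + 1
  have hcover : ∀ W, IsVertexCover (pathHyperedges n t) W → r ≤ #W := fun W hW =>
    (Nat.div_lt_iff_lt_mul (by omega)).mpr <|
      (le_mul_card_of_isVertexCover_pathHyperedges hW).lt_of_ne fun heq =>
        hdvd ⟨_, heq.trans (mul_comm _ _)⟩
  have hmem : ∏ v, (X v : MvPolynomial (ZMod n) k) ∈ idealOfVars (ZMod n) k ^ (t * r) := by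
    rw [pow_mul]
    have hsymb := prod_X_mem_symbolicPower_edgeIdeal (k := k) hcover
    rw [h r (Nat.le_add_left 1 _)] at hsymb
    exact Ideal.pow_right_mono (edgeIdeal_le_pow_idealOfVars fun e he =>
      (card_of_mem_pathHyperedges htn he).ge) r hsymb
  have hdeg := (prod_X_mem_pow_idealOfVars_iff _ _).mp hmem
  rw [Finset.card_univ, ZMod.card] at hdeg
  exact absurd hdeg (Nat.lt_mul_div_succ n (by omega)).not_ge

/-- if all symbolic powers of the t-path ideal of the cycle Cₙ equal
the ordinary powers, then t divides n. -/
theorem stmt11 {k : Type*} [Field k] (n t : ℕ) [NeZero n] (hn : 2 ≤ n) (ht : 2 ≤ t)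
    (htn : t ≤ n)
    (h : ∀ r : ℕ, 1 ≤ r →
      symbolicPower (edgeIdeal k (pathHyperedges n t)) r =
        (edgeIdeal k (pathHyperedges n t)) ^ r) :
    t ∣ n :=
  stmt11_general n t ht htn h
end

section
/- Let n ≥ 2, 2 ≤ t ≤ n, write n = tq + r with 0 ≤ r ≤ t−1. The maximum size of an independent set in the t-path hypergraph H_t(C_n) is n − q if r = 0 and n − q − 1 if r ≠ 0. -/
open Finset

namespace CyclicPathHypergraph

variable {n t : ℕ} [NeZero n]

def window (t : ℕ) (i : ZMod n) : Finset (ZMod n) :=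
  univ.image fun j : Fin t => i + ((j : ℕ) : ZMod n)

lemma mem_window (htn : t ≤ n) {i x : ZMod n} : x ∈ window t i ↔ (x - i).val < t := by
  simp only [window, mem_image, mem_univ, true_and]
  constructor
  · rintro ⟨j, rfl⟩
    rw [add_sub_cancel_left, ZMod.val_cast_of_lt (j.2.trans_le htn)]
    exact j.2
  · intro h
    exact ⟨⟨(x - i).val, h⟩, by simp⟩

/-- `B` meets every window: for `t ≤ n`, `(b - i).val < t` means `b ∈ window t i`. -/
def IsTransversal (t : ℕ) (B : Finset (ZMod n)) : Prop :=
  ∀ i : ZMod n, ∃ b ∈ B, (b - i).val < t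

lemma forall_not_subset_iff_isTransversal_compl (htn : t ≤ n) (W : Finset (ZMod n)) :
    (∀ e ∈ pathHyperedges n t, ¬ e ⊆ W) ↔ IsTransversal t Wᶜ := by
  have hedges : pathHyperedges n t = univ.image (window t) := rfl
  simp only [IsTransversal, hedges, mem_image, mem_univ, true_and, forall_exists_index,
    forall_apply_eq_imp_iff, not_subset, mem_window htn, mem_compl, and_comm]

lemma card_filter_val_lt (htn : t ≤ n) : #{x : ZMod n | x.val < t} = t := by
  refine (card_nbij' (t := range t) ZMod.val Nat.cast (fun x hx => ?_) (fun j hj => ?_)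
    (fun x _ => ?_) (fun j hj => ?_)).trans (card_range t)
  · simpa using hx
  · simp only [coe_range, Set.mem_Iio] at hj
    simpa [ZMod.val_cast_of_lt (hj.trans_le htn)] using hj
  · exact ZMod.natCast_zmod_val x
  · simp only [coe_range, Set.mem_Iio] at hj
    exact ZMod.val_cast_of_lt (hj.trans_le htn)

lemma card_filter_sub_val_lt (htn : t ≤ n) (b : ZMod n) :
    #{i : ZMod n | (b - i).val < t} = t := by
  refine (card_nbij' (b - ·) (b - ·) (by simp [Set.MapsTo]) (by simp [Set.MapsTo])
    (fun _ _ => sub_sub_cancel b _) (fun _ _ => sub_sub_cancel b _)).trans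
    (card_filter_val_lt htn)

lemma le_mul_card_of_isTransversal (htn : t ≤ n) {B : Finset (ZMod n)}
    (hB : IsTransversal t B) : n ≤ t * #B := by
  have hcount := card_mul_le_card_mul (s := univ) (t := B) (m := 1) (n := t)
    (fun i b => (b - i).val < t)
    (fun i _ => one_le_card.2 (by simpa [bipartiteAbove, filter_nonempty_iff] using hB i))
    (fun b _ => by simpa [bipartiteBelow] using (card_filter_sub_val_lt htn b).le)
  simpa [ZMod.card, mul_comm] using hcount

lemma exists_isTransversal_card_le (htn : t ≤ n) {k : ℕ} (hk : n ≤ t * k) :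
    ∃ B : Finset (ZMod n), #B ≤ k ∧ IsTransversal t B := by
  refine ⟨(range k).image fun j => ((j * t + (t - 1) : ℕ) : ZMod n),
    card_image_le.trans (card_range k).le, fun i => ?_⟩
  set v := i.val
  have hv : v < n := ZMod.val_lt i
  have ht : 0 < t := Nat.pos_of_ne_zero (by rintro rfl; omega)
  have hdiv : v / t < k := (Nat.div_lt_iff_lt_mul ht).2 (by linarith)
  have hvmod : v / t * t + v % t = v := Nat.div_add_mod' v t
  have hmod : v % t < t := Nat.mod_lt v ht
  refine ⟨_, mem_image_of_mem _ (mem_range.2 hdiv), ?_⟩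
  rw [← ZMod.natCast_zmod_val i, ← Nat.cast_sub (by omega),
    ZMod.val_cast_of_lt (by omega)]
  omega

theorem isGreatest_card_independent (htn : t ≤ n) (ht : 0 < t) :
    IsGreatest {m : ℕ | ∃ W : Finset (ZMod n),
      (∀ e ∈ pathHyperedges n t, ¬ e ⊆ W) ∧ #W = m} (n - n ⌈/⌉ t) := by
  have hcompl (W : Finset (ZMod n)) : #Wᶜ = n - #W := by rw [card_compl, ZMod.card]
  constructor
  · obtain ⟨B, hBk, hB⟩ := exists_isTransversal_card_le htn ((ceilDiv_le_iff_le_mul ht).1 le_rfl)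
    have hkB : n ⌈/⌉ t ≤ #B := (ceilDiv_le_iff_le_mul ht).2 (le_mul_card_of_isTransversal htn hB)
    refine ⟨Bᶜ, (forall_not_subset_iff_isTransversal_compl htn _).2 (by rwa [compl_compl]), ?_⟩
    rw [hcompl, le_antisymm hBk hkB]
  · rintro _ ⟨W, hW, rfl⟩
    have hkW := (ceilDiv_le_iff_le_mul ht).2
      (le_mul_card_of_isTransversal htn ((forall_not_subset_iff_isTransversal_compl htn W).1 hW))
    rw [hcompl] at hkW
    have hWn : #W ≤ n := (card_le_univ W).trans (ZMod.card n).le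
    omega

end CyclicPathHypergraph

lemma Nat.mul_add_ceilDiv {t q r : ℕ} (hr : r < t) :
    (t * q + r) ⌈/⌉ t = if r = 0 then q else q + 1 := by
  have ht : 0 < t := by omega
  rw [Nat.ceilDiv_eq_add_pred_div, show t * q + r + t - 1 = t * q + (r + t - 1) by omega,
    Nat.mul_add_div ht]
  split_ifs with h
  · simp [h, Nat.div_eq_of_lt (Nat.sub_lt ht one_pos)]
  · rw [Nat.div_eq_of_lt_le (k := 1) (by omega) (by omega)]

theorem stmt13_general (n t q r : ℕ) [NeZero n] (htn : t ≤ n)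
    (hq : n = t * q + r) (hr : r < t) :
    IsGreatest
      { m : ℕ | ∃ W : Finset (ZMod n),
          (∀ e ∈ pathHyperedges n t, ¬ e ⊆ W) ∧ W.card = m }
      (if r = 0 then n - q else n - q - 1) := by
  have hceil : n ⌈/⌉ t = if r = 0 then q else q + 1 := hq ▸ Nat.mul_add_ceilDiv hr
  convert CyclicPathHypergraph.isGreatest_card_independent htn (by omega : 0 < t) using 1
  split_ifs at hceil ⊢ <;> omega

/-- writing n = t*q + r with 0 ≤ r < t, the maximum size of an
independent set of the t-path hypergraph of Cₙ is n - q if r = 0 and n - q - 1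
otherwise. -/
theorem stmt13 (n t q r : ℕ) [NeZero n] (hn : 2 ≤ n) (ht : 2 ≤ t) (htn : t ≤ n)
    (hq : n = t * q + r) (hr : r < t) :
    IsGreatest
      { m : ℕ | ∃ W : Finset (ZMod n),
          (∀ e ∈ pathHyperedges n t, ¬ e ⊆ W) ∧ W.card = m }
      (if r = 0 then n - q else n - q - 1) :=
  stmt13_general n t q r htn hq hr
end
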